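/- arXiv:2310.18522 — 9 statements merged into one kernel-verified Lean document; each statement's English description precedes it below -/
import Mathlib

section
/- Let L be a frame. The following are equivalent: (i) for all a, b with a ≠ ⊤ and ¬(a ≤ b), there exist u, v with ¬(u ≤ a), ¬(v ≤ b), and (u ⇨ a) ⊔ (v ⇨ b) = ⊤; (ii) for all a, b with a ≠ ⊤ and ¬(a ≤ b), there exist u, v with u ⇨ a ≠ a, v ⇨ b ≠ b, and u ⊔ v = ⊤. -/
theorem propF_i_iff_iv {L : Type*} [Order.Frame L] :
    (∀ a b : L, a ≠ ⊤ → ¬ a ≤ b →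
      ∃ u v : L, ¬ u ≤ a ∧ ¬ v ≤ b ∧ (u ⇨ a) ⊔ (v ⇨ b) = ⊤) ↔
    (∀ a b : L, a ≠ ⊤ → ¬ a ≤ b →
      ∃ u v : L, u ⇨ a ≠ a ∧ v ⇨ b ≠ b ∧ u ⊔ v = ⊤) := by
  constructor
  · intro h a b ha hab
    obtain ⟨u, v, hu, hv, htop⟩ := h a b ha hab
    refine ⟨u ⇨ a, v ⇨ b, ?_, ?_, htop⟩
    · intro heq
      exact hu (by
        have : u ≤ (u ⇨ a) ⇨ a := le_himp_iff.mpr (by rw [inf_comm]; exact himp_inf_le)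
        rwa [heq] at this)
    · intro heq
      exact hv (by
        have : v ≤ (v ⇨ b) ⇨ b := le_himp_iff.mpr (by rw [inf_comm]; exact himp_inf_le)
        rwa [heq] at this)
  · intro h a b ha hab
    obtain ⟨u, v, hu, hv, htop⟩ := h a b ha hab
    refine ⟨u ⇨ a, v ⇨ b, ?_, ?_, ?_⟩
    · intro hle
      exact hu (le_antisymm hle le_himp)
    · intro hle
      exact hv (le_antisymm hle le_himp)
    · refine top_le_iff.mp ?_
      rw [← htop]
      exact sup_le_sup
        (le_himp_iff.mpr (by rw [inf_comm]; exact himp_inf_le))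
        (le_himp_iff.mpr (by rw [inf_comm]; exact himp_inf_le))
end

section
/- Let L be a frame. The following are equivalent: (i) for all a, b with a ≠ ⊤ and ¬(a ≤ b), there exist u, v with a < u, b < v, and (u ⇨ a) ⊔ (v ⇨ b) = ⊤; (ii) for all a, b with a ≠ ⊤ and ¬(a ≤ b), there exist u, v with v ≤ a, a < u, ¬(v ≤ b), and (u ⇨ a) ⊔ (v ⇨ b) = ⊤. -/
theorem propF_ii_iff_iii {L : Type*} [Order.Frame L] :
    (∀ a b : L, a ≠ ⊤ → ¬ a ≤ b →
      ∃ u v : L, a < u ∧ b < v ∧ (u ⇨ a) ⊔ (v ⇨ b) = ⊤) ↔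
    (∀ a b : L, a ≠ ⊤ → ¬ a ≤ b →
      ∃ u v : L, v ≤ a ∧ a < u ∧ ¬ v ≤ b ∧ (u ⇨ a) ⊔ (v ⇨ b) = ⊤) := by
  constructor
  · intro h a b ha hab
    have hab' : ¬ a ≤ a ⇨ b := fun h' => hab (by simpa using le_himp_iff.mp h')
    obtain ⟨u, v, hu, hv, htop⟩ := h a (a ⇨ b) ha hab'
    refine ⟨u, a ⊓ v, inf_le_left, hu, ?_, ?_⟩
    · intro hle
      exact hv.not_ge (le_himp_iff.mpr (by rwa [inf_comm] at hle))
    · have : (a ⊓ v) ⇨ b = v ⇨ (a ⇨ b) := by rw [himp_himp, inf_comm]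
      rw [this]; exact htop
  · intro h a b ha hab
    obtain ⟨u, v, hva, hu, hvb, htop⟩ := h a b ha hab
    refine ⟨u, b ⊔ v, hu, left_lt_sup.mpr hvb, ?_⟩
    rw [sup_himp_distrib, himp_self, top_inf_eq]
    exact htop
end

section
/- Let L be a frame. The following are equivalent: (i) for all a, b with a ≠ ⊤ and ¬(a ≤ b), there exist u, v with a ≤ u, b ≤ v, u ⇨ a ≠ a, v ⇨ b ≠ b, and u ⊔ v = ⊤; (ii) for all a, b with a ≠ ⊤ and ¬(a ≤ b), there exist u, v with a ≤ u, u ⇨ a ≠ a, ¬(a ⊓ (v ⇨ b) ≤ b), and u ⊔ v = ⊤. -/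
theorem propF_v_iff_vi {L : Type*} [Order.Frame L] :
    (∀ a b : L, a ≠ ⊤ → ¬ a ≤ b →
      ∃ u v : L, a ≤ u ∧ b ≤ v ∧ u ⇨ a ≠ a ∧ v ⇨ b ≠ b ∧ u ⊔ v = ⊤) ↔
    (∀ a b : L, a ≠ ⊤ → ¬ a ≤ b →
      ∃ u v : L, a ≤ u ∧ u ⇨ a ≠ a ∧ ¬ a ⊓ (v ⇨ b) ≤ b ∧ u ⊔ v = ⊤) := by
  constructor
  · intro h a b ha hab
    obtain ⟨u, v, hau, hbv, hua, hvb, huv⟩ := h a (a ⇨ b) ha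
      (fun h' => hab (by simpa using le_himp_iff.mp h'))
    refine ⟨u, v, hau, hua, ?_, huv⟩
    intro hle
    have h1 : v ⇨ b ≤ a ⇨ b := le_himp_iff.mpr (by rwa [inf_comm])
    have h2 : v ⇨ a ⇨ b ≤ a ⇨ b := by
      calc v ⇨ a ⇨ b = a ⇨ v ⇨ b := by rw [himp_himp, himp_himp, inf_comm]
        _ ≤ a ⇨ a ⇨ b := himp_le_himp_left h1
        _ = a ⇨ b := by rw [himp_himp, inf_idem]
    exact hvb (le_antisymm h2 le_himp)
  · intro h a b ha hab
    obtain ⟨u, v, hau, hua, hvb, huv⟩ := h a b ha hab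
    refine ⟨u, v ⊔ b, hau, le_sup_right, hua, ?_, ?_⟩
    · have hvb' : (v ⊔ b) ⇨ b = v ⇨ b := by rw [sup_himp_distrib, himp_self, inf_top_eq]
      rw [hvb']
      intro heq
      exact hvb (by rw [heq]; exact inf_le_right)
    · rw [← top_le_iff, ← huv]
      exact sup_le_sup_left le_sup_left u
end

section
/- If a frame L satisfies property (F), then every prime element of L is maximal (i.e., for every prime p and every a with p < a, one has a = ⊤). -/
theorem propF_implies_T1 {L : Type*} [Order.Frame L]
    (hF : ∀ a b : L, a ≠ ⊤ → ¬ a ≤ b →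
      ∃ u v : L, u ⇨ a ≠ a ∧ v ⇨ b ≠ b ∧ u ⊔ v = ⊤) :
    ∀ p : L, p ≠ ⊤ → (∀ x y : L, x ⊓ y ≤ p → x ≤ p ∨ y ≤ p) →
      ∀ a : L, p < a → a = ⊤ := by
  intro p hp hprime a hpa
  by_contra ha
  have hnle : ¬ a ≤ p := fun h => absurd (lt_of_lt_of_le hpa h) (lt_irrefl p)
  obtain ⟨u, v, hu, hv, huv⟩ := hF a p ha hnle
  have hvp : v ≤ p := by
    rcases hprime v (v ⇨ p) inf_himp_le with h | h
    · exact h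
    · exact absurd (le_antisymm h le_himp) hv
  have hua : u ⊔ a = ⊤ := top_unique (huv ▸ sup_le_sup_left (hvp.trans hpa.le) u)
  refine hu (le_antisymm ?_ le_himp)
  calc u ⇨ a = (u ⊔ a) ⊓ (u ⇨ a) := by rw [hua, top_inf_eq]
    _ = u ⊓ (u ⇨ a) ⊔ a ⊓ (u ⇨ a) := inf_sup_right _ _ _
    _ ≤ a := sup_le inf_himp_le inf_le_left
end

section
/- Fitness implies property (F): if for all a, b with ¬(a ≤ b) there exists c with a ⊔ c = ⊤ and ¬(c ⇨ b ≤ b), then L satisfies property (F). -/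
theorem fit_implies_propF {L : Type*} [Order.Frame L]
    (hfit : ∀ a b : L, ¬ a ≤ b → ∃ c : L, a ⊔ c = ⊤ ∧ ¬ c ⇨ b ≤ b) :
    ∀ a b : L, a ≠ ⊤ → ¬ a ≤ b →
      ∃ u v : L, u ⇨ a ≠ a ∧ v ⇨ b ≠ b ∧ u ⊔ v = ⊤ := by
  intro a b ha hab
  obtain ⟨c, hc, hcb⟩ := hfit a b hab
  exact ⟨a, c, by simp [himp_self, Ne.symm ha], fun h => hcb (le_of_eq h), hc⟩
end

section
/- Property (F) is hereditary: if a frame L satisfies property (F) and S is a sublocale of L (a subset closed under arbitrary infima such that a ⇨ s ∈ S for all a ∈ L, s ∈ S), then S, with the induced order, satisfies property (F) (where joins in S are given by applying the nucleus/coclosure ν_S to joins in L, and Heyting implication in S coincides with that of L restricted to second arguments in S). -/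
/-- Property (F) is hereditary: it passes from a frame to any sublocale. -/
theorem propF_hereditary {L : Type*} [Order.Frame L] (S : Set L)
    (hInf : ∀ T : Set L, T ⊆ S → sInf T ∈ S)
    (hHimp : ∀ a : L, ∀ s ∈ S, a ⇨ s ∈ S)
    (hF : ∀ a b : L, a ≠ ⊤ → ¬ a ≤ b →
      ∃ u v : L, u ⇨ a ≠ a ∧ v ⇨ b ≠ b ∧ u ⊔ v = ⊤) :
    ∀ a ∈ S, ∀ b ∈ S, a ≠ ⊤ → ¬ a ≤ b →
      ∃ u ∈ S, ∃ v ∈ S, u ⇨ a ≠ a ∧ v ⇨ b ≠ b ∧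
        sInf {s | s ∈ S ∧ u ⊔ v ≤ s} = ⊤ := by
  -- the nucleus
  set ν : L → L := fun x => sInf {s | s ∈ S ∧ x ≤ s} with hν
  have hνS : ∀ x, ν x ∈ S := fun x => hInf _ (fun s hs => hs.1)
  have hle : ∀ x, x ≤ ν x := fun x => le_sInf (fun s hs => hs.2)
  have hνle : ∀ x, ∀ s ∈ S, x ≤ s → ν x ≤ s := fun x s hs hxs =>
    sInf_le ⟨hs, hxs⟩
  have key : ∀ x : L, ∀ c ∈ S, ν x ⇨ c = x ⇨ c := by
    intro x c hc
    apply le_antisymm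
    · exact himp_le_himp_right (hle x)
    · rw [le_himp_iff]
      have h1 : ν x ≤ (x ⇨ c) ⇨ c :=
        hνle x _ (hHimp _ _ hc) (le_himp_iff.mpr (by simp))
      calc (x ⇨ c) ⊓ ν x ≤ (x ⇨ c) ⊓ ((x ⇨ c) ⇨ c) := inf_le_inf_left _ h1
        _ ≤ c := by simp
  intro a ha b hb hat hab
  obtain ⟨u, v, hua, hvb, huv⟩ := hF a b hat hab
  refine ⟨ν u, hνS u, ν v, hνS v, ?_, ?_, ?_⟩
  · rw [key u a ha]; exact hua
  · rw [key v b hb]; exact hvb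
  · have : {s | s ∈ S ∧ ν u ⊔ ν v ≤ s} ⊆ {(⊤ : L)} := by
      intro s hs
      have hus : u ≤ s := (hle u).trans (le_sup_left.trans hs.2)
      have hvs : v ≤ s := (hle v).trans (le_sup_right.trans hs.2)
      have : (⊤ : L) ≤ s := huv ▸ sup_le hus hvs
      exact top_le_iff.mp this
    exact le_antisymm le_top (le_sInf fun s hs => (this hs).ge)
end

section
/- If a frame L satisfies property (F), then every prime p has fitted point: for every b ≠ ⊤ such that (a ⇨ b ≤ b for all a with ¬(a ≤ p)), one has b = p. -/
theorem propF_implies_ptfit {L : Type*} [Order.Frame L]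
    (hF : ∀ a b : L, a ≠ ⊤ → ¬ a ≤ b →
      ∃ u v : L, u ⇨ a ≠ a ∧ v ⇨ b ≠ b ∧ u ⊔ v = ⊤)
    (p : L) (hp : p ≠ ⊤) (hprime : ∀ x y : L, x ⊓ y ≤ p → x ≤ p ∨ y ≤ p) :
    ∀ b : L, b ≠ ⊤ → (∀ a : L, ¬ a ≤ p → a ⇨ b ≤ b) → b = p := by
  intro b hb hfit
  have hbp : b ≤ p := by
    by_contra h
    exact hb (top_le_iff.mp (himp_self (a := b) ▸ hfit b h))
  refine le_antisymm hbp ?_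
  by_contra hpb
  obtain ⟨u, v, hu, hv, huv⟩ := hF p b hp hpb
  have hvp : v ≤ p := by
    by_contra h
    exact hv (le_antisymm (hfit v h) le_himp)
  have hup : u ≤ p := by
    rcases hprime u (u ⇨ p) (by simp [inf_himp]) with h | h
    · exact h
    · exact absurd (le_antisymm h le_himp) hu
  exact hp (top_le_iff.mp (huv ▸ sup_le hup hvp))
end

section
/- Property (H) implies property (pt-fit): if L is a frame such that for all a, b with a ≠ ⊤ and ¬(a ≤ b) there exist u, v with ¬(u ≤ a), ¬(v ≤ b), and u ⊓ v = ⊥, then for every prime p of L and every b ≠ ⊤ satisfying (a ⇨ b ≤ b whenever ¬(a ≤ p)), one has b = p. -/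
theorem propH_implies_ptfit {L : Type*} [Order.Frame L]
    (hH : ∀ a b : L, a ≠ ⊤ → ¬ a ≤ b →
      ∃ u v : L, ¬ u ≤ a ∧ ¬ v ≤ b ∧ u ⊓ v = ⊥)
    (p : L) (hp : p ≠ ⊤) (hprime : ∀ x y : L, x ⊓ y ≤ p → x ≤ p ∨ y ≤ p) :
    ∀ b : L, b ≠ ⊤ → (∀ a : L, ¬ a ≤ p → a ⇨ b ≤ b) → b = p := by
  intro b hb hfit
  have hpb : p ≤ b := by
    by_contra hpb
    obtain ⟨u, v, hu, hv, huv⟩ := hH p b hp hpb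
    exact hv (le_trans (le_himp_iff.mpr (by rw [inf_comm, huv]; exact bot_le : v ⊓ u ≤ b)) (hfit u hu))
  have hbp : b ≤ p := by
    by_contra hbp
    exact hb (top_le_iff.mp (le_trans (le_himp_iff.mpr inf_le_right) (hfit b hbp)))
  exact le_antisymm hbp hpb
end

section
/- In the coproduct frame L ⊕ L (cp-ideals of L × L), for any a, b ∈ L with a ≠ ⊤ and ¬(a ≤ b), the set a ⅋ b = { (x, y) | x ≤ a or y ≤ b } is a cp-ideal, and a ⅋ b does not belong to the image of the diagonal map (1,1) : L → L ⊕ L given by a ↦ { (u,v) | u ⊓ v ≤ a }. -/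
/-- A downset of `L × L` closed under suprema in each coordinate: a cp-ideal. -/
def IsCpIdeal {L : Type*} [Order.Frame L] (D : Set (L × L)) : Prop :=
  (∀ p q : L × L, q.1 ≤ p.1 → q.2 ≤ p.2 → p ∈ D → q ∈ D) ∧
  (∀ (A : Set L) (b : L), (∀ a ∈ A, (a, b) ∈ D) → (sSup A, b) ∈ D) ∧
  (∀ (a : L) (B : Set L), (∀ b ∈ B, (a, b) ∈ D) → (a, sSup B) ∈ D)

theorem par_not_in_diagonal {L : Type*} [Order.Frame L]
    (a b : L) (ha : a ≠ ⊤) (hab : ¬ a ≤ b) :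
    IsCpIdeal {p : L × L | p.1 ≤ a ∨ p.2 ≤ b} ∧
      ¬ ∃ c : L, {p : L × L | p.1 ≤ a ∨ p.2 ≤ b} =
        {p : L × L | p.1 ⊓ p.2 ≤ c} := by
  constructor
  · refine ⟨?_, ?_, ?_⟩
    · rintro p q h1 h2 (h | h)
      · exact Or.inl (h1.trans h)
      · exact Or.inr (h2.trans h)
    · intro A b' hA
      by_cases hb : b' ≤ b
      · exact Or.inr hb
      · refine Or.inl (sSup_le fun x hx => ?_)
        rcases hA x hx with h | h
        · exact h
        · exact absurd h hb
    · intro a' B hB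
      by_cases haa : a' ≤ a
      · exact Or.inl haa
      · refine Or.inr (sSup_le fun y hy => ?_)
        rcases hB y hy with h | h
        · exact absurd h haa
        · exact h
  · rintro ⟨c, hc⟩
    have h1 : ((c, ⊤) : L × L) ∈ {p : L × L | p.1 ≤ a ∨ p.2 ≤ b} := by
      rw [hc]; simp
    have h2 : ((⊤, c) : L × L) ∈ {p : L × L | p.1 ≤ a ∨ p.2 ≤ b} := by
      rw [hc]; simp
    have hbc : b ≤ c := by
      have : ((⊤, b) : L × L) ∈ {p : L × L | p.1 ⊓ p.2 ≤ c} := by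
        rw [← hc]; exact Or.inr le_rfl
      simpa using this
    have hac : a ≤ c := by
      have : ((a, ⊤) : L × L) ∈ {p : L × L | p.1 ⊓ p.2 ≤ c} := by
        rw [← hc]; exact Or.inl le_rfl
      simpa using this
    rcases h1 with h | h
    · rcases h2 with h' | h'
      · exact ha (top_le_iff.mp h')
      · exact hab (hac.trans h')
    · exact hab (le_top.trans h)
end
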